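/- arXiv:2308.07125 — 6 statements merged into one kernel-verified Lean document; each statement's English description precedes it below -/
import Mathlib

section
/- Define the integer sequence (d_n) by d₀ = 1, d₁ = 3, d₂ = 9, d₃ = 27 and d_n = 3·d_{n−1} − 3·d_{n−3} + d_{n−4} for n ≥ 4. Then the limit lim_{n→∞} (1/n)·log d_n exists and equals log((3+√5)/2). -/
open Filter

/-- The algebraic entropy of the Hietarinta–Viallet degree sequence:
`lim (1/n)·log d_n = log ((3+√5)/2)`. -/
theorem hv_algebraic_entropy (d : ℕ → ℤ)
    (h0 : d 0 = 1) (h1 : d 1 = 3) (h2 : d 2 = 9) (h3 : d 3 = 27)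
    (hrec : ∀ n : ℕ, 4 ≤ n → d n = 3 * d (n - 1) - 3 * d (n - 3) + d (n - 4)) :
    Tendsto (fun n : ℕ => (1 / (n : ℝ)) * Real.log (d n)) atTop
      (nhds (Real.log ((3 + Real.sqrt 5) / 2))) := by
  set s : ℝ := Real.sqrt 5 with hs
  have hs5 : s ^ 2 = 5 := Real.sq_sqrt (by norm_num)
  have hs2 : 2 < s := by nlinarith [Real.sqrt_nonneg 5]
  have hs3 : s < 3 := by nlinarith [Real.sqrt_nonneg 5]
  set α : ℝ := (3 + s) / 2 with hα
  set β : ℝ := (3 - s) / 2 with hβ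
  have hα2 : α ^ 2 = 3 * α - 1 := by
    rw [hα]; linear_combination hs5 / 4
  have hβ2 : β ^ 2 = 3 * β - 1 := by
    rw [hβ]; linear_combination hs5 / 4
  have hα1 : (5 / 2 : ℝ) < α := by rw [hα]; linarith
  have hβ0 : 0 < β := by rw [hβ]; linarith
  have hβ1 : β < 1 := by rw [hβ]; linarith
  -- closed form
  have key : ∀ n : ℕ, (d n : ℝ) = (8 * α ^ n + 8 * β ^ n - 10 - (-1 : ℝ) ^ n) / 5 := by
    intro n
    induction n using Nat.strong_induction_on with
    | _ n ih =>
      match n with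
      | 0 => rw [h0]; push_cast; rw [hα, hβ]; norm_num
      | 1 => rw [h1]; push_cast; rw [hα, hβ]; ring
      | 2 => rw [h2]; push_cast; rw [hα, hβ]; linear_combination (-4/5 : ℝ) * hs5
      | 3 => rw [h3]; push_cast; rw [hα, hβ]; linear_combination (-18/5 : ℝ) * hs5
      | (m + 4) =>
        have h := hrec (m + 4) (by omega)
        have e1 : m + 4 - 1 = m + 3 := rfl
        have e3 : m + 4 - 3 = m + 1 := rfl
        have e4 : m + 4 - 4 = m := rfl
        rw [e1, e3, e4] at h
        rw [h]
        push_cast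
        rw [ih (m + 3) (by omega), ih (m + 1) (by omega), ih m (by omega)]
        linear_combination (-8 / 5 * α ^ m * (α ^ 2 - 1)) * hα2 +
          (-8 / 5 * β ^ m * (β ^ 2 - 1)) * hβ2
  -- bounds for n ≥ 2 : α^n ≤ d n ≤ 2 α^n
  have hαpos : (0 : ℝ) < α := by linarith
  have hbound : ∀ n : ℕ, 2 ≤ n → α ^ n ≤ (d n : ℝ) ∧ (d n : ℝ) ≤ 2 * α ^ n := by
    intro n hn
    have hβn0 : (0 : ℝ) < β ^ n := pow_pos hβ0 n
    have hβn1 : β ^ n ≤ 1 := pow_le_one₀ hβ0.le hβ1.le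
    have hneg1 : (-1 : ℝ) ^ n ≤ 1 := by
      rcases Nat.even_or_odd n with he | ho
      · rw [Even.neg_one_pow he]
      · rw [Odd.neg_one_pow ho]; norm_num
    have hneg1' : (-1 : ℝ) ≤ (-1 : ℝ) ^ n := by
      rcases Nat.even_or_odd n with he | ho
      · rw [Even.neg_one_pow he]; norm_num
      · rw [Odd.neg_one_pow ho]
    have hαn : (5 / 2 : ℝ) ^ 2 ≤ α ^ n := by
      calc (5 / 2 : ℝ) ^ 2 ≤ α ^ 2 := by nlinarith
        _ ≤ α ^ n := pow_le_pow_right₀ (by linarith) hn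
    rw [key n]
    constructor
    · nlinarith
    · nlinarith
  -- squeeze
  have hlog2 : Tendsto (fun n : ℕ => Real.log (5/2*2) / (n : ℝ)) atTop (nhds 0) :=
    tendsto_const_div_atTop_nhds_zero_nat _
  apply tendsto_of_tendsto_of_tendsto_of_le_of_le'
    (tendsto_const_nhds : Tendsto (fun _ : ℕ => Real.log α) atTop (nhds (Real.log α)))
    (by simpa using (tendsto_const_nhds.add
      (tendsto_const_div_atTop_nhds_zero_nat (Real.log 2)) :
      Tendsto (fun n : ℕ => Real.log α + Real.log 2 / (n : ℝ)) atTop (nhds (Real.log α + 0))))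
  · filter_upwards [eventually_ge_atTop 2] with n hn
    have hn0 : (0 : ℝ) < n := by exact_mod_cast Nat.lt_of_lt_of_le (by norm_num) hn
    obtain ⟨hlo, hhi⟩ := hbound n hn
    have hpow : (0 : ℝ) < α ^ n := pow_pos hαpos n
    have hlog : Real.log (α ^ n) ≤ Real.log (d n) := Real.log_le_log hpow hlo
    rw [Real.log_pow] at hlog
    have : Real.log α = (1 / (n : ℝ)) * ((n : ℝ) * Real.log α) := by field_simp
    rw [this]
    apply mul_le_mul_of_nonneg_left _ (by positivity)
    exact_mod_cast hlog
  · filter_upwards [eventually_ge_atTop 2] with n hn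
    have hn0 : (0 : ℝ) < n := by exact_mod_cast Nat.lt_of_lt_of_le (by norm_num) hn
    obtain ⟨hlo, hhi⟩ := hbound n hn
    have hpow : (0 : ℝ) < α ^ n := pow_pos hαpos n
    have hdpos : (0 : ℝ) < (d n : ℝ) := lt_of_lt_of_le hpow hlo
    have hlog : Real.log (d n) ≤ Real.log (2 * α ^ n) := Real.log_le_log hdpos hhi
    rw [Real.log_mul (by norm_num) (ne_of_gt hpow), Real.log_pow] at hlog
    have e : Real.log α + Real.log 2 / (n : ℝ) =
        (1 / (n : ℝ)) * (Real.log 2 + (n : ℝ) * Real.log α) := by field_simp; ring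
    rw [e]
    apply mul_le_mul_of_nonneg_left _ (by positivity)
    exact_mod_cast hlog
end

section
/- Define the integer sequence (d_n) by d₀ = 1, d₁ = 3, d₂ = 9, d₃ = 27 and d_n = 3·d_{n−1} − 3·d_{n−3} + d_{n−4} for n ≥ 4. Then d_n > 0 for all n and the ratios d_{n+1}/d_n converge to (3+√5)/2 ≈ 2.618033988 as n → ∞. -/
/-!
The characteristic polynomial of the recurrence is `x⁴ - 3x³ + 3x - 1 = (x² - 3x + 1)(x² - 1)`,
with roots `α = (3 + √5)/2`, `β = α⁻¹ = (3 - √5)/2`, `1` and `-1`. Matching the initial values gives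
`d n = (8 (αⁿ + βⁿ) - (-1)ⁿ)/5 - 2`. Since `αⁿ + βⁿ ≥ 2` by AM–GM, `d n ≥ 1`; and since
`d n / αⁿ → 8/5 ≠ 0`, the ratios `d (n+1) / d n` tend to `α`.
-/

open Filter Topology

theorem tendsto_succ_div_of_tendsto_div_pow {𝕜 : Type*} [NormedField 𝕜] {u : ℕ → 𝕜} {r c : 𝕜}
    (hr : r ≠ 0) (hc : c ≠ 0) (h : Tendsto (fun n ↦ u n / r ^ n) atTop (𝓝 c)) :
    Tendsto (fun n ↦ u (n + 1) / u n) atTop (𝓝 r) := by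
  have hsucc := (h.comp (tendsto_add_atTop_nat 1)).const_mul r
  have hquot := hsucc.div h hc
  rw [mul_div_cancel_right₀ r hc] at hquot
  refine hquot.congr fun n ↦ ?_
  rcases eq_or_ne (u n) 0 with hu | hu
  · simp [hu]
  · simp only [Pi.div_apply, Function.comp_apply, pow_succ]
    field_simp

namespace HietarintaViallet

noncomputable def α : ℝ := (3 + √5) / 2

noncomputable def β : ℝ := (3 - √5) / 2

def recurrence : LinearRecurrence ℝ := ⟨4, ![1, -3, 0, 3]⟩

lemma isSolution_iff {u : ℕ → ℝ} :
    recurrence.IsSolution u ↔ ∀ n, u (n + 4) = 3 * u (n + 3) - 3 * u (n + 1) + u n := by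
  show (∀ n, u (n + 4) = ∑ i : Fin 4, ![1, -3, 0, 3] i * u (n + i)) ↔ _
  congr! 2 with n
  simp [Fin.sum_univ_four]
  ring

lemma sqrt_five_sq : √5 ^ 2 = 5 := Real.sq_sqrt (by norm_num)

lemma α_pos : 0 < α := by
  unfold α; positivity

lemma β_pos : 0 < β := by
  have : √5 < 3 := by rw [Real.sqrt_lt' (by norm_num)]; norm_num
  unfold β; linarith

lemma β_lt_one : β < 1 := by
  have : 1 < √5 := by rw [Real.lt_sqrt (by norm_num)]; norm_num
  unfold β; linarith

lemma α_mul_β : α * β = 1 := by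
  unfold α β; linear_combination -sqrt_five_sq / 4

lemma α_sq : α ^ 2 - 3 * α + 1 = 0 := by
  unfold α; linear_combination sqrt_five_sq / 4

lemma β_sq : β ^ 2 - 3 * β + 1 = 0 := by
  unfold β; linear_combination sqrt_five_sq / 4

noncomputable def closedForm (n : ℕ) : ℝ := (8 * (α ^ n + β ^ n) - (-1) ^ n) / 5 - 2

lemma closedForm_isSolution : recurrence.IsSolution closedForm :=
  isSolution_iff.2 fun n ↦ by
    unfold closedForm
    linear_combination (8 / 5 * α ^ n * (α ^ 2 - 1)) * α_sq + (8 / 5 * β ^ n * (β ^ 2 - 1)) * β_sq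

lemma one_le_closedForm (n : ℕ) : 1 ≤ closedForm n := by
  have hprod : α ^ n * β ^ n = 1 := by rw [← mul_pow, α_mul_β, one_pow]
  have hβn := pow_pos β_pos n
  have hsum : 2 ≤ α ^ n + β ^ n := by nlinarith [sq_nonneg (β ^ n - 1)]
  have hsign : (-1 : ℝ) ^ n ≤ 1 := (le_abs_self _).trans (abs_neg_one_pow n).le
  unfold closedForm
  linarith

lemma closedForm_div_α_pow (n : ℕ) :
    closedForm n / α ^ n = 8 / 5 * (1 + (β ^ 2) ^ n) - (-β) ^ n / 5 - 2 * β ^ n := by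
  have hprod : α ^ n * β ^ n = 1 := by rw [← mul_pow, α_mul_β, one_pow]
  rw [div_eq_mul_inv, ← inv_pow, inv_eq_of_mul_eq_one_right α_mul_β, closedForm]
  linear_combination 8 / 5 * hprod

lemma tendsto_closedForm_div_α_pow :
    Tendsto (fun n ↦ closedForm n / α ^ n) atTop (𝓝 (8 / 5)) := by
  have hβ : Tendsto (β ^ ·) atTop (𝓝 0) :=
    tendsto_pow_atTop_nhds_zero_of_lt_one β_pos.le β_lt_one
  have hβsq : Tendsto ((β ^ 2) ^ ·) atTop (𝓝 0) :=
    tendsto_pow_atTop_nhds_zero_of_lt_one (by positivity)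
      (pow_lt_one₀ β_pos.le β_lt_one two_ne_zero)
  have hnegβ : Tendsto ((-β) ^ ·) atTop (𝓝 0) :=
    tendsto_pow_atTop_nhds_zero_of_abs_lt_one (by rw [abs_neg, abs_of_pos β_pos]; exact β_lt_one)
  simp_rw [closedForm_div_α_pow]
  convert (((hβsq.const_add 1).const_mul (8 / 5)).sub (hnegβ.div_const 5)).sub
    (hβ.const_mul 2) using 2
  norm_num

lemma cast_eq_closedForm {d : ℕ → ℤ} (h0 : d 0 = 1) (h1 : d 1 = 3) (h2 : d 2 = 9)
    (h3 : d 3 = 27) (hrec : ∀ n : ℕ, 4 ≤ n → d n = 3 * d (n - 1) - 3 * d (n - 3) + d (n - 4))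
    (n : ℕ) : (d n : ℝ) = closedForm n := by
  have hsol : recurrence.IsSolution (fun n ↦ (d n : ℝ)) :=
    isSolution_iff.2 fun n ↦ by exact_mod_cast hrec (n + 4) (by omega)
  refine congrFun ((recurrence.eq_iff_eqOn_range_order _ _ hsol closedForm_isSolution).2 ?_) n
  intro k hk
  simp only [recurrence, Finset.coe_range, Set.mem_Iio] at hk
  interval_cases k <;> norm_num [h0, h1, h2, h3, closedForm, α, β] <;> ring_nf <;> norm_num

end HietarintaViallet

/-- The Hietarinta–Viallet degree sequence is positive and its successive ratios
`d (n+1) / d n` converge to `(3+√5)/2 ≈ 2.618033988`. -/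
theorem hv_degree_ratios (d : ℕ → ℤ)
    (h0 : d 0 = 1) (h1 : d 1 = 3) (h2 : d 2 = 9) (h3 : d 3 = 27)
    (hrec : ∀ n : ℕ, 4 ≤ n → d n = 3 * d (n - 1) - 3 * d (n - 3) + d (n - 4)) :
    (∀ n : ℕ, 0 < d n) ∧
      Tendsto (fun n : ℕ => (d (n + 1) : ℝ) / (d n : ℝ)) atTop
        (nhds ((3 + Real.sqrt 5) / 2)) := by
  have hd := HietarintaViallet.cast_eq_closedForm h0 h1 h2 h3 hrec
  refine ⟨fun n ↦ ?_, ?_⟩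
  · have : (0 : ℝ) < d n := by
      rw [hd]; linarith [HietarintaViallet.one_le_closedForm n]
    exact_mod_cast this
  · simp_rw [hd]
    exact tendsto_succ_div_of_tendsto_div_pow HietarintaViallet.α_pos.ne' (by norm_num)
      HietarintaViallet.tendsto_closedForm_div_α_pow
end

section
/- Let a be an indeterminate and work in ℤ[a][x,y,z]. Let φ(x,y,z) = (x³ + a·z³ − y·x², x³, x²·z) and let φ⁴ denote the fourth compositional iterate of φ, a triple of homogeneous polynomials of degree 81 in x, y, z. Then the greatest common divisor of the three components of φ⁴(x,y,z) is a homogeneous polynomial of degree 8 in x, y, z; equivalently, after dividing the three components by their gcd, the reduced fourth iterate consists of three coprime homogeneous polynomials of degree 73. -/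
open MvPolynomial

/-- The Hietarinta–Viallet map `φ(x,y,z) = (x³ + a·z³ − y·x², x³, x²·z)` over `ℤ[a]`,
with `a` the indeterminate of `Polynomial ℤ`. -/
noncomputable def hvPhiZ
    (p : MvPolynomial (Fin 3) (Polynomial ℤ) × MvPolynomial (Fin 3) (Polynomial ℤ) ×
         MvPolynomial (Fin 3) (Polynomial ℤ)) :
    MvPolynomial (Fin 3) (Polynomial ℤ) × MvPolynomial (Fin 3) (Polynomial ℤ) ×
      MvPolynomial (Fin 3) (Polynomial ℤ) :=
  (p.1 ^ 3 + C Polynomial.X * p.2.2 ^ 3 - p.2.1 * p.1 ^ 2, p.1 ^ 3, p.1 ^ 2 * p.2.2)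

/-!
Write `u₁`, `u₂` for the first components of `φ(x,y,z)` and `φ²(x,y,z)`. Modulo `x²` one has
`u₂ ≡ a z³ u₁²`, and the first component of `φ³` is `x³ s` with `s ≡ -u₁² u₂²` modulo `x³`. Hence
`a z³ u₁⁶ u₂³ - s²` is divisible by `x²`, which puts the extra factor `x⁸` into the first component
`x⁹ s³ + x⁶ u₂³ (a z³ u₁⁶ u₂³ - s²)` of `φ⁴`; the other two are `x⁹ s³` and `x⁸ z s² u₁² u₂²`.
Since `φ` triples the degree of a homogeneous triple, the cofactors `q₀, q₁, q₂` of `x⁸` have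
degree `81 - 8`.

A common factor of `q₁ = x s³` and `q₂` is prime to `x`, since `q₂` survives `x = 0`, and prime to
`s`, since `x² q₀ ≡ a z³ u₁⁶ u₂⁶` modulo `s`. Here `s`, `u₁`, `u₂` are pairwise coprime by the
congruences `u₂ ≡ a x⁶ z³` and `s ≡ a x³ z³ u₂²` modulo `u₁` and `s ≡ a x³ z³ u₁⁶` modulo `u₂`,
because the primes `a, x, z` divide none of them, as specialising `(a, x, y, z)` to `(0, 1, 2, 0)`
and to `(1, 0, 0, 1)` shows.
-/

theorem MvPolynomial.IsHomogeneous.of_X_pow_mul {σ R : Type*} [CommSemiring R] {i : σ}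
    {k n : ℕ} {q : MvPolynomial σ R} (h : (X i ^ k * q).IsHomogeneous (k + n)) :
    q.IsHomogeneous n := by
  intro d hd
  have := h (d := Finsupp.single i k + d)
    (by rwa [X_pow_eq_monomial, coeff_monomial_mul, one_mul])
  rw [map_add, Finsupp.weight_single, Pi.one_apply, smul_eq_mul, mul_one] at this
  omega

theorem not_dvd_of_map_eq_zero {M N F : Type*} [MonoidWithZero M] [MonoidWithZero N]
    [FunLike F M N] [MonoidWithZeroHomClass F M N] (f : F) {p q : M} (hp : f p = 0)
    (hq : f q ≠ 0) : ¬p ∣ q := by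
  rintro ⟨c, rfl⟩
  exact hq (by rw [map_mul, hp, zero_mul])

theorem Irreducible.isRelPrime_of_map_eq_zero {M N F : Type*} [MonoidWithZero M]
    [MonoidWithZero N] [FunLike F M N] [MonoidWithZeroHomClass F M N] {p q : M}
    (hp : Irreducible p) (f : F) (hp0 : f p = 0) (hq : f q ≠ 0) : IsRelPrime p q :=
  hp.isRelPrime_iff_not_dvd.mpr (not_dvd_of_map_eq_zero f hp0 hq)

theorem IsRelPrime.of_dvd_sub_right {R : Type*} [CommRing R] {x y z : R}
    (h : IsRelPrime x y) (hxz : x ∣ z - y) : IsRelPrime x z :=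
  fun _ hdx hdz ↦ h hdx (by simpa using dvd_sub hdz (hdx.trans hxz))

theorem dvd_of_dvd_mul_of_forall_dvd_isUnit {α : Type*} [CommMonoidWithZero α] [IsGCDMonoid α]
    {g h q₀ q₁ q₂ : α} (h₀ : h ∣ g * q₀) (h₁ : h ∣ g * q₁) (h₂ : h ∣ g * q₂)
    (hq : ∀ d, d ∣ q₀ → d ∣ q₁ → d ∣ q₂ → IsUnit d) : h ∣ g := by
  obtain ⟨_⟩ := ‹IsGCDMonoid α›
  have hunit : IsUnit (gcd q₀ (gcd q₁ q₂)) :=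
    hq _ (gcd_dvd_left _ _) ((gcd_dvd_right _ _).trans (gcd_dvd_left _ _))
      ((gcd_dvd_right _ _).trans (gcd_dvd_right _ _))
  calc h ∣ gcd (g * q₀) (gcd (g * q₁) (g * q₂)) := dvd_gcd h₀ (dvd_gcd h₁ h₂)
    _ ∣ gcd (g * q₀) (g * gcd q₁ q₂) := gcd_dvd_gcd dvd_rfl (gcd_mul_left' _ _ _).dvd
    _ ∣ g * gcd q₀ (gcd q₁ q₂) := (gcd_mul_left' _ _ _).dvd
    _ ∣ g := hunit.mul_right_dvd.mpr dvd_rfl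

namespace HietarintaViallet

abbrev Poly : Type := MvPolynomial (Fin 3) (Polynomial ℤ)

local notation "𝕒" => (C Polynomial.X : Poly)
local notation "𝕩" => (X 0 : Poly)
local notation "𝕪" => (X 1 : Poly)
local notation "𝕫" => (X 2 : Poly)

theorem hvPhiZ_apply (u v w : Poly) :
    hvPhiZ (u, v, w) = (u ^ 3 + 𝕒 * w ^ 3 - v * u ^ 2, u ^ 3, u ^ 2 * w) :=
  rfl

def IsHomogeneousTriple (p : Poly × Poly × Poly) (d : ℕ) : Prop :=
  p.1.IsHomogeneous d ∧ p.2.1.IsHomogeneous d ∧ p.2.2.IsHomogeneous d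

theorem IsHomogeneousTriple.hvPhiZ {p : Poly × Poly × Poly} {d : ℕ}
    (h : IsHomogeneousTriple p d) : IsHomogeneousTriple (hvPhiZ p) (d * 3) := by
  obtain ⟨hu, hv, hw⟩ := h
  have e₁ : 0 + d * 3 = d * 3 := zero_add _
  have e₂ : d + d * 2 = d * 3 := by ring
  have e₃ : d * 2 + d = d * 3 := by ring
  exact ⟨((hu.pow 3).add (e₁ ▸ (isHomogeneous_C _ _).mul (hw.pow 3))).sub
    (e₂ ▸ hv.mul (hu.pow 2)), hu.pow 3, e₃ ▸ (hu.pow 2).mul hw⟩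

theorem isHomogeneousTriple_iterate (n : ℕ) :
    IsHomogeneousTriple (hvPhiZ^[n] (𝕩, 𝕪, 𝕫)) (3 ^ n) := by
  induction n with
  | zero => exact ⟨isHomogeneous_X _ _, isHomogeneous_X _ _, isHomogeneous_X _ _⟩
  | succ n ih => rw [Function.iterate_succ_apply', pow_succ]; exact ih.hvPhiZ

noncomputable section

def u₁ : Poly := 𝕩 ^ 3 + 𝕒 * 𝕫 ^ 3 - 𝕪 * 𝕩 ^ 2

def t : Poly := 𝕪 * u₁ ^ 2 - 𝕒 * 𝕩 ^ 4 * 𝕫 ^ 3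

def u₂ : Poly := 𝕒 * 𝕫 ^ 3 * u₁ ^ 2 - 𝕩 ^ 2 * t

def r : Poly := 𝕒 * 𝕫 ^ 3 * (u₂ ^ 2 + u₁ ^ 6)

def s : Poly := 𝕩 ^ 3 * r - u₁ ^ 2 * u₂ ^ 2

def q₀ : Poly :=
  𝕩 * s ^ 3 + u₂ ^ 3 * (u₁ ^ 4 * u₂ ^ 3 * t + 2 * 𝕩 * r * u₁ ^ 2 * u₂ ^ 2 - 𝕩 ^ 4 * r ^ 2)

def q₁ : Poly := 𝕩 * s ^ 3

def q₂ : Poly := 𝕫 * s ^ 2 * u₂ ^ 2 * u₁ ^ 2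

theorem X_sq_mul_q₀ :
    𝕩 ^ 2 * q₀ = s ^ 2 * (𝕩 ^ 3 * s - u₂ ^ 3) + 𝕒 * 𝕫 ^ 3 * u₁ ^ 6 * u₂ ^ 6 := by
  unfold q₀
  linear_combination
    u₂ ^ 3 * (s + 𝕩 ^ 3 * r - u₁ ^ 2 * u₂ ^ 2) * s.eq_1 + u₂ ^ 6 * u₁ ^ 4 * u₂.eq_1

theorem hvPhiZ_iterate_four : hvPhiZ^[4] (𝕩, 𝕪, 𝕫) =
    (𝕩 ^ 8 * q₀, 𝕩 ^ 8 * q₁, 𝕩 ^ 8 * q₂) := by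
  have h₁ : hvPhiZ (𝕩, 𝕪, 𝕫) = (u₁, 𝕩 ^ 3, 𝕩 ^ 2 * 𝕫) := by rw [hvPhiZ_apply, u₁]
  have h₂ : hvPhiZ (u₁, 𝕩 ^ 3, 𝕩 ^ 2 * 𝕫) = (u₂, u₁ ^ 3, u₁ ^ 2 * (𝕩 ^ 2 * 𝕫)) := by
    rw [hvPhiZ_apply, Prod.mk.injEq]
    refine ⟨?_, rfl⟩
    unfold u₂ t u₁; ring
  have h₃ : hvPhiZ (u₂, u₁ ^ 3, u₁ ^ 2 * (𝕩 ^ 2 * 𝕫)) =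
      (𝕩 ^ 3 * s, u₂ ^ 3, u₂ ^ 2 * (u₁ ^ 2 * (𝕩 ^ 2 * 𝕫))) := by
    rw [hvPhiZ_apply, Prod.mk.injEq]
    refine ⟨?_, rfl⟩
    unfold s r
    linear_combination
      u₂ ^ 2 * u₂.eq_1 - u₂ ^ 2 * 𝕩 ^ 2 * t.eq_1 - u₂ ^ 2 * u₁ ^ 2 * u₁.eq_1
  have h₄ : hvPhiZ (𝕩 ^ 3 * s, u₂ ^ 3, u₂ ^ 2 * (u₁ ^ 2 * (𝕩 ^ 2 * 𝕫))) =
      (𝕩 ^ 8 * q₀, 𝕩 ^ 8 * q₁, 𝕩 ^ 8 * q₂) := by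
    rw [hvPhiZ_apply, Prod.mk.injEq, Prod.mk.injEq]
    exact ⟨by linear_combination (-𝕩 ^ 6) * X_sq_mul_q₀, by unfold q₁; ring,
      by unfold q₂; ring⟩
  show hvPhiZ (hvPhiZ (hvPhiZ (hvPhiZ (𝕩, 𝕪, 𝕫)))) = _
  rw [h₁, h₂, h₃, h₄]

def evalAt (c : ℤ) (v : Fin 3 → ℤ) : Poly →+* ℤ :=
  eval₂Hom (Polynomial.evalRingHom c) v

theorem isRelPrime_monomial {f : Poly} (h₀ : evalAt 0 ![1, 2, 0] f ≠ 0)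
    (h₁ : evalAt 1 ![0, 0, 1] f ≠ 0) (i j k : ℕ) : IsRelPrime (𝕒 ^ i * 𝕩 ^ j * 𝕫 ^ k) f := by
  have ha : IsRelPrime 𝕒 f :=
    ((prime_C_iff (σ := Fin 3)).mpr Polynomial.prime_X).irreducible.isRelPrime_of_map_eq_zero
      (evalAt 0 ![1, 2, 0]) (by simp [evalAt]) h₀
  have hx : IsRelPrime 𝕩 f :=
    X_prime.irreducible.isRelPrime_of_map_eq_zero (evalAt 1 ![0, 0, 1]) (by simp [evalAt]) h₁
  have hz : IsRelPrime 𝕫 f :=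
    X_prime.irreducible.isRelPrime_of_map_eq_zero (evalAt 0 ![1, 2, 0]) (by simp [evalAt]) h₀
  exact (ha.pow_left.mul_left hx.pow_left).mul_left hz.pow_left

theorem evalAt_u₁ : evalAt 0 ![1, 2, 0] u₁ = -1 ∧ evalAt 1 ![0, 0, 1] u₁ = 1 := by
  simp [evalAt, u₁]

theorem evalAt_u₂ : evalAt 0 ![1, 2, 0] u₂ = -2 ∧ evalAt 1 ![0, 0, 1] u₂ = 1 := by
  simp [evalAt, u₂, t, u₁]

theorem evalAt_s : evalAt 0 ![1, 2, 0] s = -4 ∧ evalAt 1 ![0, 0, 1] s = -1 := by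
  simp [evalAt, s, r, u₂, t, u₁]

theorem isRelPrime_u₁_monomial (i j k : ℕ) : IsRelPrime (𝕒 ^ i * 𝕩 ^ j * 𝕫 ^ k) u₁ :=
  isRelPrime_monomial (by simp [evalAt_u₁]) (by simp [evalAt_u₁]) i j k

theorem isRelPrime_u₂_monomial (i j k : ℕ) : IsRelPrime (𝕒 ^ i * 𝕩 ^ j * 𝕫 ^ k) u₂ :=
  isRelPrime_monomial (by simp [evalAt_u₂]) (by simp [evalAt_u₂]) i j k

theorem isRelPrime_s_monomial (i j k : ℕ) : IsRelPrime (𝕒 ^ i * 𝕩 ^ j * 𝕫 ^ k) s :=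
  isRelPrime_monomial (by simp [evalAt_s]) (by simp [evalAt_s]) i j k

theorem isRelPrime_u₁_u₂ : IsRelPrime u₁ u₂ :=
  (isRelPrime_u₁_monomial 1 6 3).symm.of_dvd_sub_right
    ⟨u₁ * (𝕒 * 𝕫 ^ 3 - 𝕪 * 𝕩 ^ 2), by unfold u₂ t; ring⟩

theorem isRelPrime_u₁_s : IsRelPrime u₁ s :=
  ((isRelPrime_u₁_monomial 1 3 3).symm.mul_right
      (isRelPrime_u₁_u₂.pow_right (n := 2))).of_dvd_sub_right
    ⟨u₁ * (𝕒 * 𝕩 ^ 3 * 𝕫 ^ 3 * u₁ ^ 4 - u₂ ^ 2), by unfold s r; ring⟩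

theorem isRelPrime_u₂_s : IsRelPrime u₂ s :=
  ((isRelPrime_u₂_monomial 1 3 3).symm.mul_right
      (isRelPrime_u₁_u₂.symm.pow_right (n := 6))).of_dvd_sub_right
    ⟨u₂ * (𝕒 * 𝕩 ^ 3 * 𝕫 ^ 3 - u₁ ^ 2), by unfold s r; ring⟩

theorem isRelPrime_s_q₀ : IsRelPrime s q₀ := by
  have haz : IsRelPrime s (𝕒 * 𝕫 ^ 3) := by simpa using (isRelPrime_s_monomial 1 0 3).symm
  have h : IsRelPrime s (𝕒 * 𝕫 ^ 3 * u₁ ^ 6 * u₂ ^ 6) :=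
    (haz.mul_right isRelPrime_u₁_s.symm.pow_right).mul_right isRelPrime_u₂_s.symm.pow_right
  exact (h.of_dvd_sub_right
    ⟨s * (𝕩 ^ 3 * s - u₂ ^ 3), by rw [X_sq_mul_q₀]; ring⟩).of_mul_right_right

theorem isRelPrime_X_q₂ : IsRelPrime 𝕩 q₂ :=
  X_prime.irreducible.isRelPrime_of_map_eq_zero (evalAt 1 ![0, 0, 1]) (by simp [evalAt])
    (by simp only [q₂, map_mul, map_pow, evalAt_u₁.2, evalAt_u₂.2, evalAt_s.2]; simp [evalAt])

theorem isUnit_of_dvd_q (h : Poly) (h₀ : h ∣ q₀) (h₁ : h ∣ q₁) (h₂ : h ∣ q₂) : IsUnit h :=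
  ((isRelPrime_X_q₂.of_dvd_right h₂).symm.mul_right
    (isRelPrime_s_q₀.of_dvd_right h₀).symm.pow_right).isUnit_of_dvd h₁

theorem isHomogeneous_q :
    q₀.IsHomogeneous 73 ∧ q₁.IsHomogeneous 73 ∧ q₂.IsHomogeneous 73 := by
  obtain ⟨h₀, h₁, h₂⟩ := isHomogeneousTriple_iterate 4
  rw [hvPhiZ_iterate_four] at h₀ h₁ h₂
  exact ⟨h₀.of_X_pow_mul, h₁.of_X_pow_mul, h₂.of_X_pow_mul⟩

end

end HietarintaViallet

/-- The gcd of the three components of the fourth compositional iterate `φ⁴` of the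
Hietarinta–Viallet map (a triple of homogeneous polynomials of degree 81) is a homogeneous
polynomial of degree 8; equivalently, dividing the components by this gcd leaves three
coprime homogeneous polynomials of degree 73. -/
theorem hv_fourth_iterate_gcd :
    ∃ g q₀ q₁ q₂ : MvPolynomial (Fin 3) (Polynomial ℤ),
      g.IsHomogeneous 8 ∧
      q₀.IsHomogeneous 73 ∧ q₁.IsHomogeneous 73 ∧ q₂.IsHomogeneous 73 ∧
      (hvPhiZ^[4] (X 0, X 1, X 2)).1 = g * q₀ ∧
      (hvPhiZ^[4] (X 0, X 1, X 2)).2.1 = g * q₁ ∧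
      (hvPhiZ^[4] (X 0, X 1, X 2)).2.2 = g * q₂ ∧
      (∀ h : MvPolynomial (Fin 3) (Polynomial ℤ),
        h ∣ (hvPhiZ^[4] (X 0, X 1, X 2)).1 → h ∣ (hvPhiZ^[4] (X 0, X 1, X 2)).2.1 →
          h ∣ (hvPhiZ^[4] (X 0, X 1, X 2)).2.2 → h ∣ g) ∧
      (∀ h : MvPolynomial (Fin 3) (Polynomial ℤ),
        h ∣ q₀ → h ∣ q₁ → h ∣ q₂ → IsUnit h) := by
  open HietarintaViallet in
  rw [hvPhiZ_iterate_four]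
  obtain ⟨hq₀, hq₁, hq₂⟩ := isHomogeneous_q
  exact ⟨X 0 ^ 8, q₀, q₁, q₂, by simpa using (isHomogeneous_X _ 0).pow 8, hq₀, hq₁, hq₂,
    rfl, rfl, rfl, fun _ h₀ h₁ h₂ ↦ dvd_of_dvd_mul_of_forall_dvd_isUnit h₀ h₁ h₂ isUnit_of_dvd_q,
    isUnit_of_dvd_q⟩
end

section
/- Work in ℤ[x,y,z,u,t]. Define φ(x,y,z,u,t) = (x·z·t², x·u·y·(t−y), u·y²·(t−y), u·y·(t−y)·z, u·y·(t−y)·t) and ψ(x,y,z,u,t) = (x·y·z·(t−z), x·z²·(t−z), x·z·u·(t−z), y·u·t², x·z·(t−z)·t). Then the composition ψ∘φ applied to the variables (x,y,z,u,t) equals m·(x, y, z, u, t) componentwise, where m = x·y⁴·z·u³·t²·(t−y)⁴. -/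
open MvPolynomial

/-- Abbreviation for `ℤ[x,y,z,u,t]` with variables `x = X 0`, `y = X 1`, `z = X 2`,
`u = X 3`, `t = X 4`. -/
abbrev P4Ring := MvPolynomial (Fin 5) ℤ

/-- The homogeneous degree-4 representative of the birational self-map of `P⁴`:
`φ(x,y,z,u,t) = (x·z·t², x·u·y·(t−y), u·y²·(t−y), u·y·(t−y)·z, u·y·(t−y)·t)`. -/
noncomputable def phiP4 (p : P4Ring × P4Ring × P4Ring × P4Ring × P4Ring) :
    P4Ring × P4Ring × P4Ring × P4Ring × P4Ring :=
  (p.1 * p.2.2.1 * p.2.2.2.2 ^ 2,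
   p.1 * p.2.2.2.1 * p.2.1 * (p.2.2.2.2 - p.2.1),
   p.2.2.2.1 * p.2.1 ^ 2 * (p.2.2.2.2 - p.2.1),
   p.2.2.2.1 * p.2.1 * (p.2.2.2.2 - p.2.1) * p.2.2.1,
   p.2.2.2.1 * p.2.1 * (p.2.2.2.2 - p.2.1) * p.2.2.2.2)

/-- The homogeneous representative of the birational inverse:
`ψ(x,y,z,u,t) = (x·y·z·(t−z), x·z²·(t−z), x·z·u·(t−z), y·u·t², x·z·(t−z)·t)`. -/
noncomputable def psiP4 (p : P4Ring × P4Ring × P4Ring × P4Ring × P4Ring) :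
    P4Ring × P4Ring × P4Ring × P4Ring × P4Ring :=
  (p.1 * p.2.1 * p.2.2.1 * (p.2.2.2.2 - p.2.2.1),
   p.1 * p.2.2.1 ^ 2 * (p.2.2.2.2 - p.2.2.1),
   p.1 * p.2.2.1 * p.2.2.2.1 * (p.2.2.2.2 - p.2.2.1),
   p.2.1 * p.2.2.2.1 * p.2.2.2.2 ^ 2,
   p.1 * p.2.2.1 * (p.2.2.2.2 - p.2.2.1) * p.2.2.2.2)

/-- The composition `ψ ∘ φ` applied to the variables `(x,y,z,u,t)` equals
`m·(x,y,z,u,t)` componentwise, where `m = x·y⁴·z·u³·t²·(t−y)⁴`. -/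
theorem psiP4_comp_phiP4 :
    (psiP4 ∘ phiP4) (X 0, X 1, X 2, X 3, X 4) =
      (X 0 * X 1 ^ 4 * X 2 * X 3 ^ 3 * X 4 ^ 2 * (X 4 - X 1) ^ 4 * X 0,
       X 0 * X 1 ^ 4 * X 2 * X 3 ^ 3 * X 4 ^ 2 * (X 4 - X 1) ^ 4 * X 1,
       X 0 * X 1 ^ 4 * X 2 * X 3 ^ 3 * X 4 ^ 2 * (X 4 - X 1) ^ 4 * X 2,
       X 0 * X 1 ^ 4 * X 2 * X 3 ^ 3 * X 4 ^ 2 * (X 4 - X 1) ^ 4 * X 3,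
       X 0 * X 1 ^ 4 * X 2 * X 3 ^ 3 * X 4 ^ 2 * (X 4 - X 1) ^ 4 * X 4) := by
  simp only [Function.comp, phiP4, psiP4]
  refine Prod.ext ?_ (Prod.ext ?_ (Prod.ext ?_ (Prod.ext ?_ ?_))) <;> ring
end

section
/- Work in ℤ[x,y,z,u,t]. With φ(x,y,z,u,t) = (x·z·t², x·u·y·(t−y), u·y²·(t−y), u·y·(t−y)·z, u·y·(t−y)·t) and ψ(x,y,z,u,t) = (x·y·z·(t−z), x·z²·(t−z), x·z·u·(t−z), y·u·t², x·z·(t−z)·t), the composition φ∘ψ applied to the variables (x,y,z,u,t) equals m′·(x, y, z, u, t) componentwise, where m′ = x³·y·z⁴·u·t²·(t−z)⁴. -/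
open MvPolynomial

/-- The composition `φ ∘ ψ` applied to the variables `(x,y,z,u,t)` equals
`m′·(x,y,z,u,t)` componentwise, where `m′ = x³·y·z⁴·u·t²·(t−z)⁴`. -/
theorem phiP4_comp_psiP4 :
    (phiP4 ∘ psiP4) (X 0, X 1, X 2, X 3, X 4) =
      (X 0 ^ 3 * X 1 * X 2 ^ 4 * X 3 * X 4 ^ 2 * (X 4 - X 2) ^ 4 * X 0,
       X 0 ^ 3 * X 1 * X 2 ^ 4 * X 3 * X 4 ^ 2 * (X 4 - X 2) ^ 4 * X 1,
       X 0 ^ 3 * X 1 * X 2 ^ 4 * X 3 * X 4 ^ 2 * (X 4 - X 2) ^ 4 * X 2,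
       X 0 ^ 3 * X 1 * X 2 ^ 4 * X 3 * X 4 ^ 2 * (X 4 - X 2) ^ 4 * X 3,
       X 0 ^ 3 * X 1 * X 2 ^ 4 * X 3 * X 4 ^ 2 * (X 4 - X 2) ^ 4 * X 4) := by
  simp only [Function.comp, phiP4, psiP4]
  refine Prod.ext ?_ (Prod.ext ?_ (Prod.ext ?_ (Prod.ext ?_ ?_))) <;> ring
end

section
/- Let Q(s) = s²² − s²⁰ − s¹⁹ − s¹⁷ + s¹⁵ + s¹⁴ − s¹³ − s¹² − s¹⁰ − s⁹ + s⁸ + s⁷ − s⁵ − s³ − s² + 1, and let λ be its largest real root (so 1.400618 < λ < 1.400619). Then every complex root ρ of Q satisfies 1/λ ≤ |ρ| ≤ λ; in particular the smallest modulus among the roots of Q equals 1/λ and is attained at the real root 1/λ, and the largest modulus equals λ. -/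
/-! `Q` is palindromic: `Q(s) = s¹¹ P(s + 1/s)` for a monic integer trace polynomial `P` of
degree 11, and `1/ρ` is a root of `Q` whenever `ρ` is, so it suffices to show `|ρ| ≤ λ`.
Sign changes isolate nine real roots of `P` in intervals of width `10⁻⁴`; Vieta (the roots of `P`
sum to `0`, and `P(3) = 31351` is the product of the `3 - τ`) then makes the remaining two roots
the roots of an explicit real quadratic. Every root `τ` of `P` except the one above `2` satisfies
`(Re τ)² ≤ 3.85` and `(Im τ)² ≤ 1/20`, which forces `|s|² < 1.96 < λ²` whenever `s + 1/s = τ`.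
The root of `P` above `2` comes from positive real roots of `Q`, which are at most `λ` by
maximality. -/

open Polynomial

/-- The degree-22 integer polynomial `Q` governing the entropy of the `P⁴` map. -/
noncomputable def Qpoly : Polynomial ℤ :=
  X ^ 22 - X ^ 20 - X ^ 19 - X ^ 17 + X ^ 15 + X ^ 14 - X ^ 13 - X ^ 12 - X ^ 10 - X ^ 9
    + X ^ 8 + X ^ 7 - X ^ 5 - X ^ 3 - X ^ 2 + 1

noncomputable def tracePoly : ℤ[X] :=
  X ^ 11 - 12 * X ^ 9 - X ^ 8 + 53 * X ^ 7 + 7 * X ^ 6 - 104 * X ^ 5 - 13 * X ^ 4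
    + 86 * X ^ 3 + 2 * X ^ 2 - 24 * X + 4

theorem aeval_tracePoly {R : Type*} [CommRing R] (x : R) :
    aeval x tracePoly = x ^ 11 - 12 * x ^ 9 - x ^ 8 + 53 * x ^ 7 + 7 * x ^ 6 - 104 * x ^ 5
      - 13 * x ^ 4 + 86 * x ^ 3 + 2 * x ^ 2 - 24 * x + 4 := by
  simp only [tracePoly, map_add, map_sub, map_mul, map_pow, aeval_X, map_ofNat]

theorem aeval_Qpoly_eq_pow_mul_aeval_tracePoly {K : Type*} [Field K] {z : K} (hz : z ≠ 0) :
    aeval z Qpoly = z ^ 11 * aeval (z + z⁻¹) tracePoly := by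
  rw [aeval_tracePoly]
  simp only [Qpoly, map_add, map_sub, map_pow, aeval_X, map_one]
  field_simp
  ring

theorem ne_zero_of_aeval_Qpoly_eq_zero {R : Type*} [CommRing R] [Nontrivial R] {z : R}
    (h : aeval z Qpoly = 0) : z ≠ 0 := by
  rintro rfl
  simp [Qpoly] at h

theorem aeval_Qpoly_inv_eq_zero {K : Type*} [Field K] {z : K} (h : aeval z Qpoly = 0) :
    aeval z⁻¹ Qpoly = 0 := by
  have hz := ne_zero_of_aeval_Qpoly_eq_zero h
  have key : aeval z⁻¹ Qpoly * z ^ 22 = aeval z Qpoly := by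
    simp only [Qpoly, map_add, map_sub, map_pow, aeval_X, map_one]
    field_simp
    ring
  simpa [h, hz] using key

namespace Complex

theorem aeval_ofReal_eq_zero_iff {p : ℤ[X]} {x : ℝ} : aeval (x : ℂ) p = 0 ↔ aeval x p = 0 := by
  rw [← coe_algebraMap, aeval_algebraMap_apply, coe_algebraMap, ofReal_eq_zero]

theorem exists_pos_real_eq_of_add_inv_eq {ρ : ℂ} {t : ℝ} (ht : 2 < t) (h : ρ + ρ⁻¹ = t) :
    ∃ x : ℝ, 0 < x ∧ ρ = x := by
  have hρ : ρ ≠ 0 := by rintro rfl; simp at h; norm_cast at h; linarith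
  have hN : 0 < normSq ρ := normSq_pos.mpr hρ
  have hNsq : normSq ρ = ρ.re ^ 2 + ρ.im ^ 2 := by rw [normSq_apply]; ring
  have hre : ρ.re * (normSq ρ + 1) = t * normSq ρ := by
    have := congrArg re h
    simp only [add_re, inv_re, ofReal_re] at this
    rw [← this]; field_simp
  have him : ρ.im * (normSq ρ - 1) = 0 := by
    have := congrArg im h
    simp only [add_im, inv_im, ofReal_im] at this
    field_simp at this
    linear_combination this
  have him0 : ρ.im = 0 := by
    refine (mul_eq_zero.mp him).resolve_right fun hN1 => ?_
    rw [sub_eq_zero.mp hN1] at hre hNsq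
    nlinarith [sq_nonneg ρ.im]
  refine ⟨ρ.re, ?_, ext rfl (by simp [him0])⟩
  nlinarith [sq_nonneg ρ.re]

theorem normSq_lt_of_add_inv {ρ : ℂ} (hρ : ρ ≠ 0) (hre : (ρ + ρ⁻¹).re ^ 2 ≤ 3.85)
    (him : (ρ + ρ⁻¹).im ^ 2 ≤ 1 / 20) : normSq ρ < 1.96 := by
  set N := normSq ρ with hNdef
  set a := (ρ + ρ⁻¹).re
  set b := (ρ + ρ⁻¹).im
  have hN : 0 < N := normSq_pos.mpr hρ
  have hNsq : N = ρ.re ^ 2 + ρ.im ^ 2 := by rw [hNdef, normSq_apply]; ring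
  have ha : a * N = ρ.re * (N + 1) := by
    simp only [a, add_re, inv_re, ← hNdef]; field_simp
  have hb : b * N = ρ.im * (N - 1) := by
    simp only [b, add_im, inv_im, ← hNdef]; field_simp; ring
  have e : N * ((N + 1) * (N - 1)) ^ 2
      = a ^ 2 * (N ^ 2 * (N - 1) ^ 2) + b ^ 2 * (N ^ 2 * (N + 1) ^ 2) := by
    linear_combination ((N + 1) * (N - 1)) ^ 2 * hNsq
      - (a * N + ρ.re * (N + 1)) * (N - 1) ^ 2 * ha - (b * N + ρ.im * (N - 1)) * (N + 1) ^ 2 * hb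
  have hle : ((N + 1) * (N - 1)) ^ 2 ≤ 3.85 * (N * (N - 1) ^ 2) + 1 / 20 * (N * (N + 1) ^ 2) := by
    refine le_of_mul_le_mul_left ?_ hN
    rw [e]
    nlinarith [mul_le_mul_of_nonneg_right hre (by positivity : 0 ≤ N ^ 2 * (N - 1) ^ 2),
      mul_le_mul_of_nonneg_right him (by positivity : 0 ≤ N ^ 2 * (N + 1) ^ 2)]
  -- this quartic inequality fails for every `N ≥ 1.96`
  by_contra! hbig
  have hd := sub_nonneg.mpr hbig
  nlinarith [mul_nonneg hd hd, mul_nonneg (mul_nonneg hd hd) hd]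

theorem re_sq_le_and_im_sq_le_of_sq_sub_mul_add_eq_zero {t : ℂ} {A B : ℝ}
    (hA : -3.39 ≤ A ∧ A ≤ -3.38) (hB : 2.87 ≤ B ∧ B ≤ 2.9) (h : t ^ 2 - A * t + B = 0) :
    t.re ^ 2 ≤ 3.85 ∧ t.im ^ 2 ≤ 1 / 20 := by
  have hre : t.re ^ 2 - t.im ^ 2 - A * t.re + B = 0 := by
    simpa [sq] using congrArg re h
  have him : t.im * (2 * t.re - A) = 0 := by
    have := congrArg im h
    simp [sq] at this
    linear_combination this
  obtain ⟨hA1, hA2⟩ := hA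
  obtain ⟨hB1, hB2⟩ := hB
  rcases mul_eq_zero.mp him with hy | hx
  · rw [hy] at hre ⊢
    have hd : (2 * t.re - A) ^ 2 ≤ 0.11 ^ 2 := by nlinarith
    obtain ⟨hd1, hd2⟩ := abs_le_of_sq_le_sq' hd (by norm_num)
    constructor
    · nlinarith
    · norm_num
  · have hx' : t.re = A / 2 := by linarith
    rw [hx'] at hre ⊢
    constructor <;> nlinarith

end Complex

theorem exists_mem_Ioo_eq_zero_of_mul_neg {f : ℝ → ℝ} (hf : Continuous f) {a b : ℝ}
    (hab : a ≤ b) (h : f a * f b < 0) : ∃ x ∈ Set.Ioo a b, f x = 0 := by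
  rcases lt_or_gt_of_ne (left_ne_zero_of_mul h.ne) with ha | ha
  · exact intermediate_value_Ioo hab hf.continuousOn ⟨ha, by nlinarith⟩
  · exact intermediate_value_Ioo' hab hf.continuousOn ⟨by nlinarith, ha⟩

def traceRootLo : Fin 9 → ℝ :=
  ![-1.9589, -1.1919, -0.8753, 0.194, 0.5297, 0.9582, 1.7017, 1.9147, 2.1145]

theorem aeval_traceRootLo_mul_neg (i : Fin 9) :
    aeval (traceRootLo i) tracePoly * aeval (traceRootLo i + 1 / 10000) tracePoly < 0 := by
  fin_cases i <;> norm_num [traceRootLo, aeval_tracePoly]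

theorem traceRootLo_castSucc_add_le (i : Fin 8) :
    traceRootLo i.castSucc + 1 / 10000 ≤ traceRootLo i.succ := by
  fin_cases i <;> simp [traceRootLo, Fin.succ, Fin.castSucc] <;> norm_num

theorem exists_tracePoly_real_roots : ∃ r : Fin 9 → ℝ, StrictMono r ∧
    ∀ i, aeval (r i) tracePoly = 0 ∧ r i ∈ Set.Ioo (traceRootLo i) (traceRootLo i + 1 / 10000) := by
  have hroot (i : Fin 9) := exists_mem_Ioo_eq_zero_of_mul_neg tracePoly.continuous_aeval
    (by linarith : traceRootLo i ≤ traceRootLo i + 1 / 10000) (aeval_traceRootLo_mul_neg i)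
  choose r hr hr0 using hroot
  refine ⟨r, Fin.strictMono_iff_lt_succ.mpr fun i => ?_, fun i => ⟨hr0 i, hr i⟩⟩
  linarith [(hr i.castSucc).2, (hr i.succ).1, traceRootLo_castSucc_add_le i]

theorem two_lt_or_sq_le_of_mem_traceRootLo {i : Fin 9} {x : ℝ}
    (hx : x ∈ Set.Ioo (traceRootLo i) (traceRootLo i + 1 / 10000)) : 2 < x ∨ x ^ 2 ≤ 3.85 := by
  obtain ⟨h1, h2⟩ := hx
  fin_cases i <;> simp [traceRootLo] at h1 h2
  all_goals first | (left; linarith) | (right; nlinarith)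

theorem sum_bounds_of_mem_traceRootLo {r : Fin 9 → ℝ}
    (hr : ∀ i, r i ∈ Set.Ioo (traceRootLo i) (traceRootLo i + 1 / 10000)) :
    3.3867 < ∑ i, r i ∧ ∑ i, r i < 3.3876 := by
  have hlo : ∑ i, traceRootLo i = 3.3867 := by
    simp [Fin.sum_univ_succ, traceRootLo]; norm_num
  have h1 := Finset.sum_lt_sum_of_nonempty Finset.univ_nonempty fun i _ => (hr i).1
  have h2 := Finset.sum_lt_sum_of_nonempty Finset.univ_nonempty fun i _ => (hr i).2
  rw [Finset.sum_add_distrib, hlo] at h2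
  rw [hlo] at h1
  exact ⟨h1, by norm_num at h2 ⊢; exact h2⟩

theorem prod_three_sub_bounds_of_mem_traceRootLo {r : Fin 9 → ℝ}
    (hr : ∀ i, r i ∈ Set.Ioo (traceRootLo i) (traceRootLo i + 1 / 10000)) :
    1421.8 < ∏ i, (3 - r i) ∧ ∏ i, (3 - r i) < 1422.6 := by
  have hlo : 1421.8 < ∏ i, (3 - (traceRootLo i + 1 / 10000)) ∧
      ∏ i, (3 - traceRootLo i) < 1422.6 := by
    simp [Fin.prod_univ_succ, traceRootLo]; norm_num
  have hpos (i : Fin 9) : 0 < 3 - (traceRootLo i + 1 / 10000) := by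
    fin_cases i <;> norm_num [traceRootLo]
  have h1 := Finset.prod_lt_prod_of_nonempty (g := fun i => 3 - r i) (fun i _ => hpos i)
    (fun i _ => by linarith [(hr i).2]) Finset.univ_nonempty
  have h2 := Finset.prod_lt_prod_of_nonempty (f := fun i => 3 - r i)
    (g := fun i => 3 - traceRootLo i) (fun i _ => by linarith [hpos i, (hr i).2])
    (fun i _ => by linarith [(hr i).1]) Finset.univ_nonempty
  exact ⟨hlo.1.trans h1, h2.trans hlo.2⟩

theorem tracePoly_monic : tracePoly.Monic := by unfold tracePoly; monicity!

theorem tracePoly_natDegree : tracePoly.natDegree = 11 := by unfold tracePoly; compute_degree!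

theorem tracePoly_nextCoeff : tracePoly.nextCoeff = 0 := by
  rw [nextCoeff, tracePoly_natDegree]; simp [tracePoly, coeff_X]

theorem tracePoly_map_complex_splits : (tracePoly.map (algebraMap ℤ ℂ)).Splits :=
  IsAlgClosed.splits _

theorem card_aroots_tracePoly : (tracePoly.aroots ℂ).card = 11 := by
  rw [aroots, splits_iff_card_roots.mp tracePoly_map_complex_splits,
    tracePoly_monic.natDegree_map, tracePoly_natDegree]

theorem sum_aroots_tracePoly : (tracePoly.aroots ℂ).sum = 0 := by
  have := tracePoly_map_complex_splits.nextCoeff_eq_neg_sum_roots_of_monic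
    (tracePoly_monic.map _)
  rw [nextCoeff_map (algebraMap ℤ ℂ).injective_int, tracePoly_nextCoeff, map_zero] at this
  simpa [aroots] using this.symm

theorem prod_three_sub_aroots_tracePoly :
    ((tracePoly.aroots ℂ).map (3 - ·)).prod = 31351 := by
  rw [← tracePoly_map_complex_splits.aeval_eq_prod_aroots_of_monic tracePoly_monic,
    aeval_tracePoly]
  norm_num

theorem exists_aroots_tracePoly_eq : ∃ (r : Fin 9 → ℝ) (t₁ t₂ : ℂ),
    (∀ i, r i ∈ Set.Ioo (traceRootLo i) (traceRootLo i + 1 / 10000)) ∧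
    tracePoly.aroots ℂ = (Finset.univ.val.map fun i => (r i : ℂ)) + {t₁, t₂} := by
  obtain ⟨r, hmono, hr⟩ := exists_tracePoly_real_roots
  set S : Multiset ℂ := Finset.univ.val.map fun i => (r i : ℂ)
  have hnodup : S.Nodup :=
    Finset.univ.nodup.map (Complex.ofReal_injective.comp hmono.injective)
  have hsub : S ≤ tracePoly.aroots ℂ := by
    refine (Multiset.le_iff_subset hnodup).mpr fun z hz => ?_
    obtain ⟨i, -, rfl⟩ := Multiset.mem_map.mp hz
    exact mem_aroots.mpr ⟨tracePoly_monic.ne_zero, Complex.aeval_ofReal_eq_zero_iff.mpr (hr i).1⟩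
  obtain ⟨T, hT⟩ := Multiset.le_iff_exists_add.mp hsub
  have hcard : T.card = 2 := by
    have := congrArg Multiset.card hT
    simp [card_aroots_tracePoly, S] at this
    omega
  obtain ⟨t₁, t₂, rfl⟩ := Multiset.card_eq_two.mp hcard
  exact ⟨r, t₁, t₂, fun i => (hr i).2, hT⟩

section Vieta

variable {r : Fin 9 → ℝ} {t₁ t₂ : ℂ}

theorem add_eq_of_aroots_tracePoly_eq
    (h : tracePoly.aroots ℂ = (Finset.univ.val.map fun i => (r i : ℂ)) + {t₁, t₂}) :
    t₁ + t₂ = ((-∑ i, r i : ℝ) : ℂ) := by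
  have := sum_aroots_tracePoly
  rw [h] at this
  simp only [Multiset.sum_add, Multiset.insert_eq_cons, Multiset.sum_cons,
    Multiset.sum_singleton, ← Finset.sum_eq_multiset_sum] at this
  push_cast
  linear_combination this

theorem prod_mul_three_sub_mul_three_sub_eq_of_aroots_tracePoly_eq
    (h : tracePoly.aroots ℂ = (Finset.univ.val.map fun i => (r i : ℂ)) + {t₁, t₂}) :
    ((∏ i, (3 - r i) : ℝ) : ℂ) * ((3 - t₁) * (3 - t₂)) = 31351 := by
  have := prod_three_sub_aroots_tracePoly
  rw [h] at this
  simp only [Multiset.map_add, Multiset.prod_add, Multiset.map_map, Multiset.insert_eq_cons,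
    Multiset.map_cons, Multiset.prod_cons, Multiset.map_singleton, Multiset.prod_singleton,
    Function.comp_def, ← Finset.prod_eq_multiset_prod] at this
  push_cast
  linear_combination this

end Vieta

theorem tracePoly_root_cases {τ : ℂ} (hτ : aeval τ tracePoly = 0) :
    (∃ t : ℝ, 2 < t ∧ τ = t) ∨ (τ.re ^ 2 ≤ 3.85 ∧ τ.im ^ 2 ≤ 1 / 20) := by
  obtain ⟨r, t₁, t₂, hr, hroots⟩ := exists_aroots_tracePoly_eq
  have hmem : τ ∈ tracePoly.aroots ℂ := mem_aroots.mpr ⟨tracePoly_monic.ne_zero, hτ⟩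
  rw [hroots, Multiset.mem_add] at hmem
  rcases hmem with hreal | hpair
  · obtain ⟨i, -, rfl⟩ := Multiset.mem_map.mp hreal
    exact (two_lt_or_sq_le_of_mem_traceRootLo (hr i)).imp (fun h => ⟨r i, h, rfl⟩)
      fun h => by simpa using h
  right
  set A : ℝ := -∑ i, r i
  set C : ℝ := ∏ i, (3 - r i)
  have hsum : t₁ + t₂ = A := add_eq_of_aroots_tracePoly_eq hroots
  have hprod : C * ((3 - t₁) * (3 - t₂)) = 31351 :=
    prod_mul_three_sub_mul_three_sub_eq_of_aroots_tracePoly_eq hroots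
  obtain ⟨hA1, hA2⟩ := sum_bounds_of_mem_traceRootLo hr
  obtain ⟨hC1, hC2⟩ := prod_three_sub_bounds_of_mem_traceRootLo hr
  have hD1 : 22.037 < 31351 / C := by rw [lt_div_iff₀ (by linarith)]; linarith
  have hD2 : 31351 / C < 22.051 := by rw [div_lt_iff₀ (by linarith)]; linarith
  have hmul : t₁ * t₂ = ((31351 / C - 9 + 3 * A : ℝ) : ℂ) := by
    have hC0 : (C : ℂ) ≠ 0 := Complex.ofReal_ne_zero.mpr (by linarith)
    push_cast
    field_simp
    linear_combination hprod + 3 * C * hsum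
  have hzero : (τ - t₁) * (τ - t₂) = 0 := by
    simp only [Multiset.insert_eq_cons, Multiset.mem_cons, Multiset.mem_singleton] at hpair
    rcases hpair with rfl | rfl <;> ring
  refine Complex.re_sq_le_and_im_sq_le_of_sq_sub_mul_add_eq_zero (A := A)
    (B := 31351 / C - 9 + 3 * A) ⟨by linarith, by linarith⟩ ⟨by linarith, by linarith⟩ ?_
  linear_combination hzero + τ * hsum - hmul

theorem norm_le_of_aeval_Qpoly_eq_zero {lam : ℝ} (hlb : (1.400618 : ℝ) < lam)
    (hmax : ∀ μ : ℝ, aeval μ Qpoly = 0 → μ ≤ lam) {ρ : ℂ} (hρ : aeval ρ Qpoly = 0) :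
    ‖ρ‖ ≤ lam := by
  have hρ0 := ne_zero_of_aeval_Qpoly_eq_zero hρ
  have hτ : aeval (ρ + ρ⁻¹) tracePoly = 0 := by
    rw [aeval_Qpoly_eq_pow_mul_aeval_tracePoly hρ0] at hρ
    exact (mul_eq_zero.mp hρ).resolve_left (pow_ne_zero _ hρ0)
  rcases tracePoly_root_cases hτ with ⟨t, ht, hτt⟩ | ⟨hre, him⟩
  · obtain ⟨x, hx, rfl⟩ := Complex.exists_pos_real_eq_of_add_inv_eq ht hτt
    rw [Complex.norm_real, Real.norm_of_nonneg hx.le]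
    exact hmax x (Complex.aeval_ofReal_eq_zero_iff.mp hρ)
  · have hN := Complex.normSq_lt_of_add_inv hρ0 hre him
    rw [← Complex.sq_norm] at hN
    nlinarith [norm_nonneg ρ]

theorem Qpoly_root_moduli_general (lam : ℝ)
    (hroot : (aeval lam) Qpoly = 0)
    (hlb : (1.400618 : ℝ) < lam)
    (hmax : ∀ μ : ℝ, (aeval μ) Qpoly = 0 → μ ≤ lam) :
    (∀ ρ : ℂ, (aeval ρ) Qpoly = 0 → 1 / lam ≤ ‖ρ‖ ∧ ‖ρ‖ ≤ lam) ∧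
    (aeval (1 / lam)) Qpoly = 0 ∧
    IsLeast {r : ℝ | ∃ ρ : ℂ, (aeval ρ) Qpoly = 0 ∧ ‖ρ‖ = r} (1 / lam) ∧
    IsGreatest {r : ℝ | ∃ ρ : ℂ, (aeval ρ) Qpoly = 0 ∧ ‖ρ‖ = r} lam := by
  have hlam : 0 < lam := lt_trans (by norm_num) hlb
  have hbounds (ρ : ℂ) (hρ : aeval ρ Qpoly = 0) : 1 / lam ≤ ‖ρ‖ ∧ ‖ρ‖ ≤ lam := by
    have hρ0 := ne_zero_of_aeval_Qpoly_eq_zero hρ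
    have hinv := norm_le_of_aeval_Qpoly_eq_zero hlb hmax (aeval_Qpoly_inv_eq_zero hρ)
    rw [norm_inv] at hinv
    exact ⟨one_div lam ▸ inv_le_of_inv_le₀ (norm_pos_iff.mpr hρ0) hinv,
      norm_le_of_aeval_Qpoly_eq_zero hlb hmax hρ⟩
  have hroot_inv : aeval (1 / lam) Qpoly = 0 := one_div lam ▸ aeval_Qpoly_inv_eq_zero hroot
  refine ⟨hbounds, hroot_inv, ⟨⟨(1 / lam : ℝ), ?_, ?_⟩, ?_⟩, ⟨⟨lam, ?_, ?_⟩, ?_⟩⟩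
  · exact Complex.aeval_ofReal_eq_zero_iff.mpr hroot_inv
  · rw [Complex.norm_real, Real.norm_of_nonneg (by positivity)]
  · rintro r ⟨ρ, hρ, rfl⟩
    exact (hbounds ρ hρ).1
  · exact Complex.aeval_ofReal_eq_zero_iff.mpr hroot
  · rw [Complex.norm_real, Real.norm_of_nonneg hlam.le]
  · rintro r ⟨ρ, hρ, rfl⟩
    exact (hbounds ρ hρ).2

/-- Let `λ` be the largest real root of `Q` (so `1.400618 < λ < 1.400619`). Then every
complex root `ρ` of `Q` satisfies `1/λ ≤ |ρ| ≤ λ`; in particular the smallest modulus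
among the roots of `Q` equals `1/λ` and is attained at the real root `1/λ`, and the
largest modulus equals `λ`. -/
theorem Qpoly_root_moduli (lam : ℝ)
    (hroot : (aeval lam) Qpoly = 0)
    (hlb : (1.400618 : ℝ) < lam) (hub : lam < (1.400619 : ℝ))
    (hmax : ∀ μ : ℝ, (aeval μ) Qpoly = 0 → μ ≤ lam) :
    (∀ ρ : ℂ, (aeval ρ) Qpoly = 0 → 1 / lam ≤ ‖ρ‖ ∧ ‖ρ‖ ≤ lam) ∧
    (aeval (1 / lam)) Qpoly = 0 ∧
    IsLeast {r : ℝ | ∃ ρ : ℂ, (aeval ρ) Qpoly = 0 ∧ ‖ρ‖ = r} (1 / lam) ∧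
    IsGreatest {r : ℝ | ∃ ρ : ℂ, (aeval ρ) Qpoly = 0 ∧ ‖ρ‖ = r} lam :=
  Qpoly_root_moduli_general lam hroot hlb hmax
end
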